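/- Let k ∈ ℤ and ℓ ∈ ℕ with 1 ≤ ℓ ≤ |k|, and let y ∈ ℝ with y ≠ 0. Then ∫_ℝ (1+ix)^{−ℓ+k} (1−ix)^{−ℓ−k} e^{−2πixy} dx = π^ℓ · |y|^{ℓ−1} · W_{|k|,ℓ−1/2}(4π|y|) / Γ(|k|+ℓ) if sgn(y) = sgn(k), and the integral equals 0 if sgn(y) = −sgn(k); in particular the integral converges absolutely. -/

import Mathlib

open MeasureTheory

/-- The classical Whittaker function `W_{K,L-1/2}` for integers `K ≥ L ≥ 1`. -/
noncomputable def Whol (K L : ℕ) (u : ℝ) : ℝ :=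
  (-1 : ℝ) ^ (K - L) * (K - L).factorial * (K + L - 1).factorial *
    ∑ m ∈ Finset.range (K - L + 1),
      (-1 : ℝ) ^ m / ((K - L - m).factorial * (2*L + m - 1).factorial * m.factorial) *
        u ^ (L + m) * Real.exp (-u / 2)

/-!
For `k = l + a > 0` write `1 + ix = 2 - (1 - ix)` and expand binomially: the integrand becomes a
linear combination of the functions `(1 - ix)⁻ⁿ` with `n = 2l + j ≥ 2`. Up to the factor
`(2π)ⁿ / (n-1)!` and the reflection `x ↦ -x`, `(1 - ix)⁻ⁿ` is the Fourier transform of the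
one-sided function `tⁿ⁻¹ e^{-2πt} 1_{t>0}` (a Gamma integral with complex rate), so by Fourier
inversion the transform of `(1 - ix)⁻ⁿ` is that one-sided function again; in particular it
vanishes for `y ≤ 0`. Summing over `j` reproduces the finite sum defining `W_{k,l-1/2}(4πy)`.
The case `k < 0` follows by `x ↦ -x`, which exchanges `1 + ix` and `1 - ix`.
-/

open Complex Set Filter Topology
open scoped FourierTransform Nat Real

section Laplace

variable {c : ℂ}

lemma norm_ofReal_pow_mul_cexp_neg_mul {t : ℝ} (ht : 0 ≤ t) (m : ℕ) :
    ‖(t : ℂ) ^ m * cexp (-c * t)‖ = t ^ m * Real.exp (-c.re * t) := by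
  simp [norm_exp, abs_of_nonneg ht]

lemma integrableOn_Ioi_pow_mul_cexp_neg_mul (hc : 0 < c.re) (m : ℕ) :
    IntegrableOn (fun t : ℝ => (t : ℂ) ^ m * cexp (-c * t)) (Ioi 0) := by
  have hreal := integrableOn_rpow_mul_exp_neg_mul_rpow (s := m) (p := 1)
    (by linarith [m.cast_nonneg (α := ℝ)]) one_pos hc
  refine hreal.mono' (by fun_prop) ?_
  filter_upwards [ae_restrict_mem measurableSet_Ioi] with t ht
  rw [norm_ofReal_pow_mul_cexp_neg_mul (le_of_lt ht), Real.rpow_one, Real.rpow_natCast]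

lemma tendsto_pow_mul_cexp_neg_mul_atTop (hc : 0 < c.re) (m : ℕ) :
    Tendsto (fun t : ℝ => (t : ℂ) ^ m * cexp (-c * t)) atTop (𝓝 0) := by
  rw [tendsto_zero_iff_norm_tendsto_zero]
  refine (tendsto_rpow_mul_exp_neg_mul_atTop_nhds_zero m c.re hc).congr' ?_
  filter_upwards [eventually_ge_atTop 0] with t ht
  rw [norm_ofReal_pow_mul_cexp_neg_mul ht, Real.rpow_natCast, neg_mul]

lemma integral_Ioi_pow_mul_cexp_neg_mul (hc : 0 < c.re) (m : ℕ) :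
    ∫ t in Ioi (0 : ℝ), (t : ℂ) ^ m * cexp (-c * t) = m ! / c ^ (m + 1) := by
  have hc0 : c ≠ 0 := fun h => by simp [h] at hc
  induction m with
  | zero =>
    simpa [hc0] using integral_exp_mul_complex_Ioi (a := -c) (by simpa using hc) 0
  | succ m ih =>
    have hderiv (t : ℝ) : HasDerivAt (fun t : ℝ => (t : ℂ) ^ (m + 1) * cexp (-c * t))
        ((m + 1) * ((t : ℂ) ^ m * cexp (-c * t)) -
          c * ((t : ℂ) ^ (m + 1) * cexp (-c * t))) t := by
      have hpow := (hasDerivAt_pow (m + 1) (t : ℂ)).comp_ofReal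
      have hexp := ((hasDerivAt_id (t : ℂ)).const_mul (-c)).cexp.comp_ofReal
      refine (hpow.mul hexp).congr_deriv ?_
      simp only [id, Nat.add_sub_cancel]
      push_cast
      ring
    have hint := integrableOn_Ioi_pow_mul_cexp_neg_mul hc
    have hFTC := integral_Ioi_of_hasDerivAt_of_tendsto' (fun t _ => hderiv t)
      (((hint m).const_mul _).sub ((hint (m + 1)).const_mul _))
      (tendsto_pow_mul_cexp_neg_mul_atTop hc (m + 1))
    rw [integral_sub ((hint m).const_mul _) ((hint (m + 1)).const_mul _), integral_const_mul,
      integral_const_mul, ih] at hFTC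
    rw [ofReal_zero, zero_pow m.succ_ne_zero, zero_mul, sub_zero, sub_eq_zero] at hFTC
    rw [← mul_div_cancel_left₀ (∫ t in Ioi (0 : ℝ), (t : ℂ) ^ (m + 1) * cexp (-c * t)) hc0,
      ← hFTC, Nat.factorial_succ]
    push_cast
    field_simp
    ring

end Laplace

lemma fourierChar_smul_eq (f : ℝ → ℂ) (x y : ℝ) :
    𝐞 (-(x * y)) • f x = f x * cexp (-(2 * π) * I * x * y) := by
  rw [Circle.smul_def, Real.fourierChar_apply, smul_eq_mul, mul_comm]
  congr 2; push_cast; ring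

lemma integral_mul_cexp_eq_fourier (f : ℝ → ℂ) (y : ℝ) :
    ∫ x, f x * cexp (-(2 * π) * I * x * y) = 𝓕 f y := by
  simp_rw [Real.fourier_real_eq, fourierChar_smul_eq]

lemma integrable_mul_cexp {f : ℝ → ℂ} (hf : Integrable f) (y : ℝ) :
    Integrable fun x => f x * cexp (-(2 * π) * I * x * y) := by
  have := (Real.fourierIntegral_convergent_iff (μ := volume) y).mpr hf
  simp_rw [Real.inner_apply, fourierChar_smul_eq] at this
  exact this

lemma fourier_const_mul (c : ℂ) (f : ℝ → ℂ) (y : ℝ) :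
    𝓕 (fun x => c * f x) y = c * 𝓕 f y :=
  congrFun (VectorFourier.fourierIntegral_const_smul _ _ _ f c) y

lemma fourier_finset_sum {ι : Type*} (s : Finset ι) {f : ι → ℝ → ℂ}
    (hf : ∀ i ∈ s, Integrable (f i)) (y : ℝ) :
    𝓕 (fun x => ∑ i ∈ s, f i x) y = ∑ i ∈ s, 𝓕 (f i) y := by
  simp_rw [← integral_mul_cexp_eq_fourier, Finset.sum_mul]
  exact integral_finsetSum s fun i hi => integrable_mul_cexp (hf i hi) y

lemma fourier_comp_neg (f : ℝ → ℂ) (y : ℝ) : 𝓕 (fun x => f (-x)) y = 𝓕 f (-y) := by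
  rw [← Real.fourierInv_eq_fourier_comp_neg, Real.fourierInv_eq_fourier_neg]

lemma sq_norm_one_add_I_mul (x : ℝ) : ‖1 + I * x‖ ^ 2 = 1 + x ^ 2 := by
  rw [Complex.sq_norm, mul_comm, ← ofReal_one, normSq_add_mul_I, one_pow]

lemma norm_one_sub_I_mul (x : ℝ) : ‖1 - I * x‖ = ‖1 + I * x‖ := by
  rw [← Complex.norm_conj]; simp

lemma one_add_I_mul_ne_zero (x : ℝ) : 1 + I * x ≠ 0 := by
  intro h; simpa using congrArg re h

lemma one_sub_I_mul_ne_zero (x : ℝ) : 1 - I * x ≠ 0 := by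
  intro h; simpa using congrArg re h

lemma norm_inv_one_add_I_mul_pow_le {n : ℕ} (hn : 2 ≤ n) (x : ℝ) :
    ‖((1 + I * x) ^ n)⁻¹‖ ≤ (1 + x ^ 2)⁻¹ := by
  have h1 : 1 ≤ ‖1 + I * x‖ := by
    nlinarith [sq_norm_one_add_I_mul x, norm_nonneg (1 + I * x), sq_nonneg x]
  rw [norm_inv, norm_pow, ← sq_norm_one_add_I_mul]
  exact inv_anti₀ (by positivity) (pow_le_pow_right₀ h1 hn)

lemma integrable_inv_one_add_I_mul_pow {n : ℕ} (hn : 2 ≤ n) :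
    Integrable fun x : ℝ => ((1 + I * x) ^ n)⁻¹ :=
  integrable_inv_one_add_sq.mono' (by fun_prop) (.of_forall (norm_inv_one_add_I_mul_pow_le hn))

lemma integrable_inv_one_sub_I_mul_pow {n : ℕ} (hn : 2 ≤ n) :
    Integrable fun x : ℝ => ((1 - I * x) ^ n)⁻¹ := by
  simpa [sub_eq_add_neg] using (integrable_inv_one_add_I_mul_pow hn).comp_neg

noncomputable def expDecayPow (n : ℕ) : ℝ → ℂ :=
  indicator (Ioi 0) fun t => (t : ℂ) ^ n * cexp (-(2 * π : ℂ) * t)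

lemma integrable_expDecayPow (n : ℕ) : Integrable (expDecayPow n) :=
  (integrable_indicator_iff measurableSet_Ioi).mpr
    (integrableOn_Ioi_pow_mul_cexp_neg_mul (by simp [Real.pi_pos]) n)

lemma continuous_expDecayPow {n : ℕ} (hn : n ≠ 0) : Continuous (expDecayPow n) := by
  have hmax : expDecayPow n =
      fun t : ℝ => ((max t 0 : ℝ) : ℂ) ^ n * cexp (-(2 * π : ℂ) * (max t 0 : ℝ)) := by
    ext t
    by_cases ht : 0 < t
    · simp [expDecayPow, ht, ht.le]
    · simp [expDecayPow, ht, le_of_not_gt ht, hn]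
  rw [hmax]
  fun_prop

lemma fourier_expDecayPow (n : ℕ) :
    𝓕 (expDecayPow n) = fun x : ℝ => n ! / (2 * π) ^ (n + 1) * ((1 + I * x) ^ (n + 1))⁻¹ := by
  ext x
  have hre : 0 < (2 * π * (1 + I * x)).re := by simp [Real.pi_pos]
  have hlaplace := integral_Ioi_pow_mul_cexp_neg_mul hre n
  rw [← div_eq_mul_inv, div_div, ← mul_pow, ← hlaplace,
    ← integral_mul_cexp_eq_fourier, ← integral_indicator measurableSet_Ioi]
  congr 1 with t
  by_cases ht : t ∈ Ioi 0
  · simp only [expDecayPow, indicator_of_mem ht, mul_assoc, ← Complex.exp_add]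
    ring_nf
  · simp [expDecayPow, indicator_of_notMem ht]

lemma fourier_one_sub_I_mul_pow_inv {n : ℕ} (hn : 2 ≤ n) (y : ℝ) :
    𝓕 (fun x : ℝ => ((1 - I * x) ^ n)⁻¹) y =
      (2 * π) ^ n / (n - 1)! * expDecayPow (n - 1) y := by
  obtain ⟨m, rfl⟩ : ∃ m, n = m + 1 := ⟨n - 1, by omega⟩
  have hm : m ≠ 0 := by omega
  have hint : Integrable (𝓕 (expDecayPow m)) := by
    rw [fourier_expDecayPow]
    exact (integrable_inv_one_add_I_mul_pow (by omega)).const_mul _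
  have hinv := (continuous_expDecayPow hm).fourierInv_fourier_eq (integrable_expDecayPow m) hint
  have hfun : (fun x : ℝ => ((1 - I * x) ^ (m + 1))⁻¹) =
      fun x => (2 * π) ^ (m + 1) / m ! * 𝓕 (expDecayPow m) (-x) := by
    ext x
    have hpi : (2 * π : ℂ) ≠ 0 := by simp [Real.pi_ne_zero]
    have hfac : (m ! : ℂ) ≠ 0 := by exact_mod_cast m.factorial_ne_zero
    have hx0 := one_sub_I_mul_ne_zero x
    have hx : 1 + I * ((-x : ℝ) : ℂ) = 1 - I * x := by push_cast; ring
    rw [fourier_expDecayPow]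
    dsimp only
    rw [hx]
    field_simp
  rw [hfun, fourier_const_mul, ← Real.fourierInv_eq_fourier_comp_neg, hinv, Nat.add_sub_cancel]

lemma sub_pow_div_pow_add {K : Type*} [Field K] (u : K) {w : K} (hw : w ≠ 0) (a b : ℕ) :
    (u - w) ^ a / w ^ (b + a) =
      ∑ j ∈ Finset.range (a + 1), a.choose j * u ^ j * (-1) ^ (a - j) * (w ^ (b + j))⁻¹ := by
  rw [sub_eq_add_neg, add_pow, Finset.sum_div]
  refine Finset.sum_congr rfl fun j hj => ?_
  have hja : b + a = b + j + (a - j) := by have := Finset.mem_range.mp hj; omega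
  rw [neg_pow, div_eq_mul_inv, hja, pow_add w, mul_inv]
  field_simp

lemma fourier_one_add_pow_div_one_sub_pow (l a : ℕ) (hl : 1 ≤ l) (y : ℝ) :
    𝓕 (fun x : ℝ => (1 + I * x) ^ a / (1 - I * x) ^ (2 * l + a)) y =
      ∑ j ∈ Finset.range (a + 1), a.choose j * 2 ^ j * (-1) ^ (a - j) *
        ((2 * π) ^ (2 * l + j) / (2 * l + j - 1)! * expDecayPow (2 * l + j - 1) y) := by
  have hexpand (x : ℝ) : (1 + I * x) ^ a / (1 - I * x) ^ (2 * l + a) =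
      ∑ j ∈ Finset.range (a + 1),
        a.choose j * 2 ^ j * (-1) ^ (a - j) * ((1 - I * x) ^ (2 * l + j))⁻¹ := by
    rw [show 1 + I * x = 2 - (1 - I * x) by ring, sub_pow_div_pow_add _ (one_sub_I_mul_ne_zero x)]
  simp_rw [hexpand]
  rw [fourier_finset_sum _ fun j _ => (integrable_inv_one_sub_I_mul_pow (by omega)).const_mul _]
  refine Finset.sum_congr rfl fun j _ => ?_
  rw [fourier_const_mul, fourier_one_sub_I_mul_pow_inv (by omega)]

lemma Whol_add (L a : ℕ) (u : ℝ) :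
    Whol (L + a) L u = (-1 : ℝ) ^ a * (2 * L + a - 1)! *
      ∑ m ∈ Finset.range (a + 1),
        (-1 : ℝ) ^ m * a.choose m / (2 * L + m - 1)! * u ^ (L + m) * Real.exp (-u / 2) := by
  rw [Whol, Nat.add_sub_cancel_left, show L + a + L - 1 = 2 * L + a - 1 by omega,
    Finset.mul_sum, Finset.mul_sum]
  refine Finset.sum_congr rfl fun m hm => ?_
  rw [Nat.cast_choose ℝ (Finset.mem_range_succ_iff.mp hm)]
  field_simp

lemma sum_choose_mul_pow_mul_exp_eq_Whol (l a : ℕ) (hl : 1 ≤ l) (y : ℝ) :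
    ∑ j ∈ Finset.range (a + 1), a.choose j * 2 ^ j * (-1) ^ (a - j) *
        ((2 * π) ^ (2 * l + j) / (2 * l + j - 1)! *
          (y ^ (2 * l + j - 1) * Real.exp (-(2 * π * y)))) =
      π ^ l * y ^ (l - 1) * Whol (l + a) l (4 * π * y) / Real.Gamma (((l + a : ℕ) : ℝ) + l) := by
  have hGamma : Real.Gamma (((l + a : ℕ) : ℝ) + l) = (2 * l + a - 1)! := by
    rw [show ((l + a : ℕ) : ℝ) + l = ((2 * l + a - 1 : ℕ) : ℝ) + 1 by
      rw [Nat.cast_sub (by omega)]; push_cast; ring, Real.Gamma_nat_eq_factorial]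
  rw [hGamma, Whol_add, Finset.mul_sum, Finset.mul_sum, Finset.sum_div]
  refine Finset.sum_congr rfl fun j hj => ?_
  obtain ⟨c, rfl⟩ : ∃ c, a = j + c := ⟨a - j, by have := Finset.mem_range_succ_iff.mp hj; omega⟩
  obtain ⟨b, rfl⟩ : ∃ b, l = b + 1 := ⟨l - 1, by omega⟩
  have hsign : (-1 : ℝ) ^ c = (-1) ^ (j + c) * (-1) ^ j := by
    rw [← pow_add, add_right_comm, ← two_mul, pow_add, pow_mul]
    norm_num
  rw [show j + c - j = c by omega, show 2 * (b + 1) + j - 1 = 2 * b + j + 1 by omega,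
    show b + 1 - 1 = b by omega, show 2 * (b + 1) + (j + c) - 1 = 2 * b + j + c + 1 by omega,
    show 4 * π * y = 2 * (2 * π * y) by ring, neg_div, mul_div_cancel_left₀ _ two_ne_zero,
    hsign]
  field_simp
  have h4 (n : ℕ) : (4 : ℝ) ^ n = 2 ^ (n * 2) := by rw [pow_mul']; norm_num
  ring_nf
  simp only [h4]

noncomputable def cpowKernel (k : ℤ) (l : ℕ) (x : ℝ) : ℂ :=
  (1 + I * x) ^ (-(l : ℂ) + k) * (1 - I * x) ^ (-(l : ℂ) - k)

lemma cpowKernel_eq_zpow (k : ℤ) (l : ℕ) (x : ℝ) :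
    cpowKernel k l x = (1 + I * x) ^ (k - l) * (1 - I * x) ^ (-l - k) := by
  rw [cpowKernel, ← cpow_intCast, ← cpow_intCast]
  push_cast
  ring_nf

lemma cpowKernel_neg (k : ℤ) (l : ℕ) (x : ℝ) : cpowKernel (-k) l (-x) = cpowKernel k l x := by
  rw [cpowKernel, cpowKernel, mul_comm]
  push_cast
  ring_nf

lemma cpowKernel_natCast_add (l a : ℕ) (x : ℝ) :
    cpowKernel (l + a : ℕ) l x = (1 + I * x) ^ a / (1 - I * x) ^ (2 * l + a) := by
  rw [cpowKernel_eq_zpow, div_eq_mul_inv, ← zpow_natCast, ← zpow_natCast, ← zpow_neg]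
  congr 2 <;> push_cast <;> ring

lemma norm_cpowKernel (k : ℤ) (l : ℕ) (x : ℝ) : ‖cpowKernel k l x‖ = ((1 + x ^ 2) ^ l)⁻¹ := by
  have h0 : ‖1 + I * x‖ ≠ 0 := norm_ne_zero_iff.mpr (one_add_I_mul_ne_zero x)
  rw [cpowKernel_eq_zpow, norm_mul, norm_zpow, norm_zpow, norm_one_sub_I_mul, ← zpow_add₀ h0,
    ← sq_norm_one_add_I_mul, ← pow_mul, ← zpow_natCast, ← zpow_neg]
  congr 1
  push_cast
  ring

lemma integrable_cpowKernel (k : ℤ) {l : ℕ} (hl : 1 ≤ l) : Integrable (cpowKernel k l) := by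
  refine integrable_inv_one_add_sq.mono' (by unfold cpowKernel; fun_prop)
    (.of_forall fun x => ?_)
  rw [norm_cpowKernel]
  exact inv_anti₀ (by positivity) (le_self_pow₀ (by nlinarith [sq_nonneg x]) (by omega))

lemma fourier_cpowKernel_natCast {K l : ℕ} (hl : 1 ≤ l) (hlK : l ≤ K) (y : ℝ) :
    𝓕 (cpowKernel K l) y = if 0 < y then
      ((π ^ l * |y| ^ (l - 1) * Whol K l (4 * π * |y|) / Real.Gamma (K + l) : ℝ) : ℂ)
      else 0 := by
  obtain ⟨a, rfl⟩ : ∃ a, K = l + a := ⟨K - l, by omega⟩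
  rw [funext (cpowKernel_natCast_add l a), fourier_one_add_pow_div_one_sub_pow l a hl]
  split_ifs with hy
  · rw [abs_of_pos hy, ← sum_choose_mul_pow_mul_exp_eq_Whol l a hl]
    push_cast
    refine Finset.sum_congr rfl fun j _ => ?_
    simp [expDecayPow, hy]
  · simp [expDecayPow, hy]

lemma fourier_cpowKernel {k : ℤ} {l : ℕ} (hl : 1 ≤ l) (hlk : l ≤ k.natAbs) (y : ℝ) :
    𝓕 (cpowKernel k l) y = if 0 < k * y then
      ((π ^ l * |y| ^ (l - 1) * Whol k.natAbs l (4 * π * |y|) /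
        Real.Gamma (k.natAbs + l) : ℝ) : ℂ)
      else 0 := by
  generalize hK : k.natAbs = K at hlk ⊢
  have hK0 : (0 : ℝ) < K := by exact_mod_cast (by omega : 0 < K)
  rcases hK ▸ Int.natAbs_eq k with rfl | rfl
  · rw [fourier_cpowKernel_natCast hl hlk, Int.cast_natCast]
    simp only [mul_pos_iff_of_pos_left hK0]
  · have hreflect : cpowKernel (-K) l = fun x => cpowKernel K l (-x) :=
      funext fun x => by rw [← cpowKernel_neg K l (-x), neg_neg]
    rw [hreflect, fourier_comp_neg, fourier_cpowKernel_natCast hl hlk, abs_neg, Int.cast_neg,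
      Int.cast_natCast, neg_mul, ← mul_neg]
    simp only [mul_pos_iff_of_pos_left hK0]

lemma mul_pos_of_sign_eq {k : ℤ} {y : ℝ} (hy : y ≠ 0) (h : Real.sign y = Int.sign k) :
    0 < (k : ℝ) * y := by
  rcases hy.lt_or_gt with hy | hy
  · rw [Real.sign_of_neg hy, eq_comm] at h
    have hk : k < 0 := Int.sign_eq_neg_one_iff_neg.mp (by exact_mod_cast h)
    exact mul_pos_of_neg_of_neg (by exact_mod_cast hk) hy
  · rw [Real.sign_of_pos hy, eq_comm] at h
    have hk : 0 < k := Int.sign_eq_one_iff_pos.mp (by exact_mod_cast h)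
    exact mul_pos (by exact_mod_cast hk) hy

lemma not_mul_pos_of_sign_eq_neg {k : ℤ} {y : ℝ} (h : Real.sign y = -Int.sign k) :
    ¬ 0 < (k : ℝ) * y := by
  intro hky
  rcases lt_trichotomy k 0 with hk | rfl | hk
  · have hy : y < 0 := neg_of_mul_pos_right hky (by exact_mod_cast hk.le)
    rw [Real.sign_of_neg hy, Int.sign_eq_neg_one_of_neg hk] at h
    norm_num at h
  · simp at hky
  · have hy : 0 < y := pos_of_mul_pos_right hky (by exact_mod_cast hk.le)
    rw [Real.sign_of_pos hy, Int.sign_eq_one_of_pos hk] at h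
    norm_num at h

/-- (Fourier transform identity from \cite[3.384.9]{GR15}.) For `k ∈ ℤ`,
`1 ≤ ℓ ≤ |k|`, and `y ≠ 0`, the integral
`∫_ℝ (1+ix)^{-ℓ+k} (1-ix)^{-ℓ-k} e^{-2πixy} dx` converges absolutely; it equals
`π^ℓ |y|^{ℓ-1} W_{|k|,ℓ-1/2}(4π|y|) / Γ(|k|+ℓ)` if `sgn(y) = sgn(k)`, and `0` if
`sgn(y) = -sgn(k)`. -/
theorem stmt7 (k : ℤ) (l : ℕ) (hl : 1 ≤ l) (hlk : (l : ℤ) ≤ |k|) (y : ℝ) (hy : y ≠ 0) :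
    Integrable (fun x : ℝ =>
        (1 + Complex.I * x) ^ (-(l : ℂ) + (k : ℂ)) *
          (1 - Complex.I * x) ^ (-(l : ℂ) - (k : ℂ)) *
          Complex.exp (-(2 * Real.pi) * Complex.I * x * y)) ∧
    (Real.sign y = (Int.sign k : ℝ) →
      (∫ x : ℝ,
          (1 + Complex.I * x) ^ (-(l : ℂ) + (k : ℂ)) *
            (1 - Complex.I * x) ^ (-(l : ℂ) - (k : ℂ)) *
            Complex.exp (-(2 * Real.pi) * Complex.I * x * y)) =
        ((Real.pi ^ l * |y| ^ (l - 1) * Whol k.natAbs l (4 * Real.pi * |y|) /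
            Real.Gamma ((k.natAbs : ℝ) + l) : ℝ) : ℂ)) ∧
    (Real.sign y = -(Int.sign k : ℝ) →
      (∫ x : ℝ,
          (1 + Complex.I * x) ^ (-(l : ℂ) + (k : ℂ)) *
            (1 - Complex.I * x) ^ (-(l : ℂ) - (k : ℂ)) *
            Complex.exp (-(2 * Real.pi) * Complex.I * x * y)) = 0) := by
  have hlk' : l ≤ k.natAbs := by rw [Int.abs_eq_natAbs] at hlk; exact_mod_cast hlk
  have hintegral := integral_mul_cexp_eq_fourier (cpowKernel k l) y
  rw [fourier_cpowKernel hl hlk'] at hintegral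
  exact ⟨integrable_mul_cexp (integrable_cpowKernel k hl) y,
    fun hsign => hintegral.trans (if_pos (mul_pos_of_sign_eq hy hsign)),
    fun hsign => hintegral.trans (if_neg (not_mul_pos_of_sign_eq_neg hsign))⟩
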